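/- Let K be a field of characteristic ≠ 2 and y ∈ K with y ≠ 0. Then for every nonnegative integer r, V_{2r}(y, y) = y^r · V_r(y - 2, 1). -/
import Mathlib


def lucasVF {K : Type*} [CommRing K] (P Q : K) : ℕ → K
  | 0 => 2
  | 1 => P
  | n + 2 => P * lucasVF P Q (n + 1) - Q * lucasVF P Q n

theorem lucasVF_two_mul_self (K : Type*) [Field K] (hchar : ringChar K ≠ 2)
    (y : K) (hy : y ≠ 0) (r : ℕ) :
    lucasVF y y (2 * r) = y ^ r * lucasVF (y - 2) 1 r := by
  have key : ∀ m, lucasVF y y (m + 4) =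
      (y ^ 2 - 2 * y) * lucasVF y y (m + 2) - y ^ 2 * lucasVF y y m := by
    intro m
    show lucasVF y y (m + 2 + 2) = _
    rw [lucasVF, show m + 2 + 1 = m + 1 + 2 from rfl, lucasVF, lucasVF]
    ring
  induction r using Nat.twoStepInduction with
  | zero => simp [lucasVF]
  | one =>
    show lucasVF y y (0 + 2) = _
    rw [lucasVF]
    simp [lucasVF]; ring
  | more n ih1 ih2 =>
    have e : 2 * (n + 2) = 2 * n + 4 := by ring
    rw [e, key, ih1, show 2 * (n + 1) = 2 * n + 2 from by ring] at *
    rw [ih2, show n + 2 = n + 2 from rfl]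
    show _ = y ^ (n + 2) * lucasVF (y - 2) 1 (n + 2)
    rw [lucasVF]
    ring
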